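/- Let f: {1,…,n} → {1,…,m} be a surjection of sets with l+1 ≤ m ≤ n. Then the restriction of f_* to the fixed subspace W_{n,l}^{𝔖_f} is a linear isomorphism onto W_{m,l}. In particular dim_ℂ W_{n,l}^{𝔖_f} = C(m−1, l), and when m = l+1 the subspace W_{n,l}^{𝔖_f} is one-dimensional. -/

import Mathlib

noncomputable section

open ExteriorAlgebra

/-- The sum-of-coordinates linear functional on `ℂ^n`. -/
def sumLin (n : ℕ) : (Fin n → ℂ) →ₗ[ℂ] ℂ where
  toFun x := ∑ i, x i
  map_add' x y := by simp [Finset.sum_add_distrib]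
  map_smul' c x := by simp [Finset.mul_sum]

/-- The standard representation `V_n = {x : ℂ^n | x_1 + ⋯ + x_n = 0}`. -/
def stdRep (n : ℕ) : Submodule ℂ (Fin n → ℂ) := LinearMap.ker (sumLin n)

/-- The exterior algebra of `ℂ^n`; the ambient home of `⋀^l ℂ^n`. -/
abbrev EA (n : ℕ) := ExteriorAlgebra ℂ (Fin n → ℂ)

/-- `W_{n,l} = ⋀^l V_n`, realized inside `⋀^l ℂ^n ⊆ ExteriorAlgebra ℂ ℂ^n`. -/
def Wsub (n l : ℕ) : Submodule ℂ (EA n) :=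
  (⋀[ℂ]^l ↥(stdRep n)).map (ExteriorAlgebra.map (stdRep n).subtype).toLinearMap

/-- The action of a permutation `σ ∈ 𝔖_n` on `⋀ ℂ^n`, induced by `(σ • x) i = x (σ⁻¹ i)`
(so that `σ • e_j = e_{σ j}`). -/
def permMap (n : ℕ) (σ : Equiv.Perm (Fin n)) : EA n →ₗ[ℂ] EA n :=
  (ExteriorAlgebra.map (LinearMap.funLeft ℂ ℂ ⇑σ⁻¹)).toLinearMap

/-- The standard basis vector `e_i` of `ℂ^n`. -/
def evec (n : ℕ) (i : Fin n) : Fin n → ℂ := Pi.single i 1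

/-- For an `(l+1)`-subset `α = {a_0 < a_1 < ⋯ < a_l}` of `{1,…,n}`,
the family of vectors `e_{a_i} − e_{a_0}`, `i = 1, …, l`. -/
def uvecs (n l : ℕ) (α : Finset (Fin n)) (hα : α.card = l + 1) : Fin l → (Fin n → ℂ) :=
  fun i => evec n ↑(α.orderIsoOfFin hα i.succ) - evec n ↑(α.orderIsoOfFin hα 0)

/-- The vector `w_α = (e_{a_1} − e_{a_0}) ∧ ⋯ ∧ (e_{a_l} − e_{a_0})`. -/
def wvec (n l : ℕ) (α : Finset (Fin n)) (hα : α.card = l + 1) : EA n :=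
  ιMulti ℂ l (uvecs n l α hα)

/-- The standard Hermitian inner product on `ℂ^n` against a fixed vector `u`
(linear in the first slot). -/
def stdInner (n : ℕ) (u : Fin n → ℂ) : (Fin n → ℂ) →ₗ[ℂ] ℂ where
  toFun x := ∑ k, x k * (starRingEnd ℂ) (u k)
  map_add' x y := by simp [add_mul, Finset.sum_add_distrib]
  map_smul' c x := by simp [Finset.mul_sum, mul_assoc]

/-- The linear map `x ↦ (⟨x, u_1⟩, …, ⟨x, u_l⟩)`. -/
def rowsMap (n l : ℕ) (u : Fin l → (Fin n → ℂ)) : (Fin n → ℂ) →ₗ[ℂ] (Fin l → ℂ) :=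
  LinearMap.pi fun j => stdInner n (u j)

/-- The alternating map `(v_1, …, v_l) ↦ det (⟨v_i, u_j⟩)_{ij}`. -/
def detPair (n l : ℕ) (u : Fin l → (Fin n → ℂ)) : (Fin n → ℂ) [⋀^Fin l]→ₗ[ℂ] ℂ :=
  (Matrix.detRowAlternating : (Fin l → ℂ) [⋀^Fin l]→ₗ[ℂ] ℂ).compLinearMap (rowsMap n l u)

/-- The linear functional `v ↦ ⟨v, u_1 ∧ ⋯ ∧ u_l⟩` on the exterior algebra: the Hermitian
inner product on `⋀^l ℂ^n` induced by the standard inner product, paired against a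
fixed pure wedge, extended by zero in other degrees. -/
def pairFun (n l : ℕ) (u : Fin l → (Fin n → ℂ)) : EA n →ₗ[ℂ] ℂ :=
  liftAlternating (fun i => if h : l = i then h ▸ detPair n l u else 0)

/-- The hyperplane `H_α = {v ∈ W_{n,l} : ⟨v, w_α⟩ = 0}`. -/
def Hplane (n l : ℕ) (α : Finset (Fin n)) (hα : α.card = l + 1) : Submodule ℂ (EA n) :=
  Wsub n l ⊓ LinearMap.ker (pairFun n l (uvecs n l α hα))
/-- The linear map `ℂ^n → ℂ^m` sending `e_i` to `e_{f i}`. -/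
def pushLin (n m : ℕ) (f : Fin n → Fin m) : (Fin n → ℂ) →ₗ[ℂ] (Fin m → ℂ) where
  toFun x := fun j => ∑ i ∈ Finset.univ.filter (fun i => f i = j), x i
  map_add' x y := by funext j; simp [Finset.sum_add_distrib]
  map_smul' c x := by funext j; simp [Finset.mul_sum]

/-- The induced map `f_* : ⋀ ℂ^n → ⋀ ℂ^m` (the exterior power of `e_i ↦ e_{f i}`). -/
def fstar (n m : ℕ) (f : Fin n → Fin m) : EA n →ₗ[ℂ] EA m :=
  (ExteriorAlgebra.map (pushLin n m f)).toLinearMap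

/-- The Young subgroup `𝔖_f ≤ 𝔖_n` of permutations preserving every fiber of `f`. -/
def youngSubgroup (n m : ℕ) (f : Fin n → Fin m) : Subgroup (Equiv.Perm (Fin n)) where
  carrier := {σ | ∀ i, f (σ i) = f i}
  one_mem' := fun _ => rfl
  mul_mem' := by
    intro a b ha hb i
    have h : (a * b) i = a (b i) := rfl
    rw [h, ha (b i), hb i]
  inv_mem' := by
    intro a ha i
    have h := ha (a⁻¹ i)
    rw [show a (a⁻¹ i) = i by simp] at h
    exact h.symm

/-- The special flat `F_f`: the intersection (inside `W_{n,l}`) of the hyperplanes `H_α`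
over all `(l+1)`-subsets `α` with `|f(α)| ≤ l`. -/
def specialFlat (n m l : ℕ) (f : Fin n → Fin m) : Submodule ℂ (EA n) :=
  Wsub n l ⊓ ⨅ (α : Finset (Fin n)) (hα : α.card = l + 1) (_ : (α.image f).card ≤ l),
    Hplane n l α hα

/-- The fixed subspace `W_{n,l}^{𝔖_f} = {v ∈ W_{n,l} : σ·v = v for all σ ∈ 𝔖_f}`. -/
def fixedW (n m l : ℕ) (f : Fin n → Fin m) : Submodule ℂ (EA n) :=
  Wsub n l ⊓ ⨅ (σ : Equiv.Perm (Fin n)) (_ : σ ∈ youngSubgroup n m f),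
    LinearMap.ker (permMap n σ - LinearMap.id)

/-- The sections of `f : {1,…,n} → {1,…,m}`: maps `g` with `f ∘ g = id`. -/
abbrev sections (n m : ℕ) (f : Fin n → Fin m) := {g : Fin m → Fin n // f ∘ g = id}

/-- The averaging map `φ_f = (1/n_f) Σ_g g_*`, over all sections `g` of `f`. -/
def phiMap (n m : ℕ) (f : Fin n → Fin m) : EA m →ₗ[ℂ] EA n :=
  letI : Fintype (sections n m f) := Fintype.ofFinite _
  (Nat.card (sections n m f) : ℂ)⁻¹ •
    ∑ g : sections n m f, (ExteriorAlgebra.map (pushLin m n g.1)).toLinearMap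

/-- A flat of the intrinsic arrangement `A_n`: an intersection of a set of hyperplanes `H_α`
(inside the ambient space `W_{n,l}` of the arrangement). -/
def IsFlat (n l : ℕ) (U : Submodule ℂ (EA n)) : Prop :=
  ∃ S : Set {α : Finset (Fin n) // α.card = l + 1},
    U = Wsub n l ⊓ ⨅ a ∈ S, Hplane n l a.1 a.2

/-- The set of lines (one-dimensional flats) of the arrangement `A_n`. -/
def lines (n l : ℕ) : Set (Submodule ℂ (EA n)) :=
  {U | IsFlat n l U ∧ Module.finrank ℂ ↥U = 1}

/-- A flat is stable if it is contained in a special flat `F_f` for some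
surjection `f : {1,…,n} → {1,…,m}` with `m < n`. -/
def IsStable (n l : ℕ) (U : Submodule ℂ (EA n)) : Prop :=
  ∃ (m : ℕ) (f : Fin n → Fin m), Function.Surjective f ∧ m < n ∧ U ≤ specialFlat n m l f

/-- The Stirling number of the second kind `S(n,k)`: the number of partitions of
`{1,…,n}` into `k` nonempty blocks. -/
def stirling (n k : ℕ) : ℕ :=
  Nat.card {P : Finpartition (Finset.univ : Finset (Fin n)) // P.parts.card = k}

/-!
Let `Σ = ∑_{σ ∈ 𝔖_f} σ` act on `⋀ ℂ^n` and let `g` be a section of `f`. For a wedge `e_J` of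
basis vectors, `(g ∘ f)_* e_J` is either `σ e_J` for some `σ ∈ 𝔖_f` (when `f` is injective on `J`:
any two sections of `f` differ by an element of `𝔖_f`), or `0`, and then `Σ e_J = 0` because a
transposition in `𝔖_f` negates `e_J`. Hence `Σ ∘ (g ∘ f)_* = Σ`, so an invariant `v` with
`f_* v = 0` satisfies `|𝔖_f| v = Σ v = Σ g_* f_* v = 0`. Conversely `w ∈ W_{m,l}` is the image of
the invariant vector `|𝔖_f|⁻¹ Σ g_* w`, because `f ∘ σ ∘ g = id`. The dimension count is then
`dim ⋀^l V_m = C(m - 1, l)`.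
-/

section PushForward

variable {n m k : ℕ}

lemma pushLin_single (f : Fin n → Fin m) (i : Fin n) (c : ℂ) :
    pushLin n m f (Pi.single i c) = Pi.single (f i) c := by
  funext j
  simp [pushLin, Pi.single_apply, eq_comm]

lemma pushLin_comp (g : Fin m → Fin k) (f : Fin n → Fin m) :
    pushLin m k g ∘ₗ pushLin n m f = pushLin n k (g ∘ f) :=
  LinearMap.pi_ext fun i c => by simp [pushLin_single]

lemma pushLin_id : pushLin n n id = LinearMap.id :=
  LinearMap.pi_ext fun i c => by simp [pushLin_single]

lemma funLeft_inv_eq_pushLin (σ : Equiv.Perm (Fin n)) :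
    LinearMap.funLeft ℂ ℂ ⇑σ⁻¹ = pushLin n n σ :=
  LinearMap.pi_ext fun i c => by
    funext j
    simp [pushLin_single, Pi.single_apply, Equiv.symm_apply_eq]

lemma permMap_eq_fstar (σ : Equiv.Perm (Fin n)) : permMap n σ = fstar n n σ := by
  rw [permMap, funLeft_inv_eq_pushLin, fstar]

lemma fstar_fstar (g : Fin m → Fin k) (f : Fin n → Fin m) (x : EA n) :
    fstar m k g (fstar n m f x) = fstar n k (g ∘ f) x := by
  rw [fstar, fstar, fstar, ← LinearMap.comp_apply, ← AlgHom.comp_toLinearMap, map_comp_map,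
    pushLin_comp]

lemma fstar_id : fstar n n id = LinearMap.id := by
  rw [fstar, pushLin_id, map_id]
  rfl

lemma fstar_ιMulti_single {l : ℕ} (f : Fin n → Fin m) (j : Fin l → Fin n) :
    fstar n m f (ιMulti ℂ l fun a => Pi.single (j a) 1) =
      ιMulti ℂ l fun a => Pi.single (f (j a)) 1 := by
  simp only [fstar, AlgHom.toLinearMap_apply, map_apply_ιMulti, Function.comp_def,
    pushLin_single]

lemma sumLin_pushLin (f : Fin n → Fin m) (x : Fin n → ℂ) :
    sumLin m (pushLin n m f x) = sumLin n x :=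
  Finset.sum_fiberwise Finset.univ f x

lemma pushLin_mem_stdRep (f : Fin n → Fin m) {x : Fin n → ℂ} (hx : x ∈ stdRep n) :
    pushLin n m f x ∈ stdRep m := by
  rw [stdRep, LinearMap.mem_ker, sumLin_pushLin]
  exact hx

end PushForward

section Wedge

variable {R M N : Type*} [CommRing R] [AddCommGroup M] [Module R M] [AddCommGroup N] [Module R N]

lemma ExteriorAlgebra.map_comp_subtype_exteriorPower (l : ℕ) (g : M →ₗ[R] N) :
    (ExteriorAlgebra.map g).toLinearMap ∘ₗ (⋀[R]^l M).subtype =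
      (⋀[R]^l N).subtype ∘ₗ exteriorPower.map l g := by
  ext v
  simp [ExteriorAlgebra.map_apply_ιMulti]

lemma ExteriorAlgebra.map_exteriorPower_le (l : ℕ) (g : M →ₗ[R] N) :
    Submodule.map (ExteriorAlgebra.map g).toLinearMap (⋀[R]^l M) ≤ ⋀[R]^l N := by
  rintro _ ⟨x, hx, rfl⟩
  have := congrArg (· ⟨x, hx⟩) (map_comp_subtype_exteriorPower l g)
  simp only [LinearMap.comp_apply, Submodule.subtype_apply] at this
  exact this ▸ Submodule.coe_mem _

end Wedge

section Wsub

variable {n m : ℕ}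

lemma map_Wsub_le (l : ℕ) (L : (Fin n → ℂ) →ₗ[ℂ] (Fin m → ℂ))
    (hL : ∀ x ∈ stdRep n, L x ∈ stdRep m) :
    Submodule.map (ExteriorAlgebra.map L).toLinearMap (Wsub n l) ≤ Wsub m l := by
  rw [Wsub, ← Submodule.map_comp, ← AlgHom.comp_toLinearMap, map_comp_map,
    show L ∘ₗ (stdRep n).subtype = (stdRep m).subtype ∘ₗ L.restrict hL from rfl,
    ← map_comp_map, AlgHom.comp_toLinearMap, Submodule.map_comp, Wsub]
  exact Submodule.map_mono (map_exteriorPower_le l _)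

lemma fstar_mem_Wsub (l : ℕ) (f : Fin n → Fin m) {x : EA n} (hx : x ∈ Wsub n l) :
    fstar n m f x ∈ Wsub m l :=
  map_Wsub_le l _ (fun _ => pushLin_mem_stdRep f) ⟨x, hx, rfl⟩

lemma finrank_stdRep (m : ℕ) : Module.finrank ℂ (stdRep m) = m - 1 := by
  rcases Nat.eq_zero_or_pos m with rfl | hm
  · exact Nat.eq_zero_of_le_zero (Submodule.finrank_le _ |>.trans (by simp))
  · have hsurj : Function.Surjective (sumLin m) := fun c =>
      ⟨Pi.single ⟨0, hm⟩ c, by simp [sumLin]⟩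
    have := LinearMap.finrank_range_add_finrank_ker (sumLin m)
    rw [LinearMap.range_eq_top.2 hsurj, finrank_top, Module.finrank_self,
      Module.finrank_fin_fun] at this
    rw [stdRep]
    omega

lemma finrank_Wsub (m l : ℕ) : Module.finrank ℂ (Wsub m l) = (m - 1).choose l := by
  have hinj : Function.Injective
      ((ExteriorAlgebra.map (stdRep m).subtype).toLinearMap ∘ₗ (⋀[ℂ]^l (stdRep m)).subtype) := by
    rw [map_comp_subtype_exteriorPower]
    exact Subtype.val_injective.comp
      (exteriorPower.map_injective_field (stdRep m).subtype_injective)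
  rw [Wsub, ← Submodule.range_subtype (⋀[ℂ]^l (stdRep m)), ← LinearMap.range_comp,
    LinearMap.finrank_range_of_inj hinj, exteriorPower.finrank_eq, finrank_stdRep]

end Wsub

section Young

variable {n m : ℕ} {f : Fin n → Fin m}

lemma swap_mem_youngSubgroup {x y : Fin n} (hxy : f x = f y) :
    Equiv.swap x y ∈ youngSubgroup n m f := by
  intro i
  rcases eq_or_ne i x with rfl | hx
  · simpa using hxy.symm
  rcases eq_or_ne i y with rfl | hy
  · simpa using hxy
  · rw [Equiv.swap_apply_of_ne_of_ne hx hy]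

/-- The witness swaps `u i` and `w i` inside each fiber `f⁻¹ {i}`. -/
lemma exists_mem_youngSubgroup_comp_eq {u w : Fin m → Fin n} (hu : f ∘ u = id)
    (hw : f ∘ w = id) : ∃ σ ∈ youngSubgroup n m f, ⇑σ ∘ u = w := by
  set τ : Fin n → Fin n := fun x => Equiv.swap (u (f x)) (w (f x)) x
  have hτ : ∀ x, f (τ x) = f x := by
    intro x
    simp only [τ, Equiv.swap_apply_def]
    split_ifs
    · exact congrFun hw (f x)
    · exact congrFun hu (f x)
    · rfl
  have hinv : Function.Involutive τ := fun x => by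
    simp only [τ] at hτ ⊢
    rw [hτ, Equiv.swap_apply_self]
  refine ⟨hinv.toPerm τ, hτ, funext fun i => ?_⟩
  have hfu : f (u i) = i := congrFun hu i
  simp [τ, hfu]

lemma exists_section_extend {g : Fin m → Fin n} (hg : f ∘ g = id) {l : ℕ} {j : Fin l → Fin n}
    (hj : Function.Injective (f ∘ j)) : ∃ u : Fin m → Fin n, f ∘ u = id ∧ u ∘ f ∘ j = j := by
  refine ⟨Function.extend (f ∘ j) j g, funext fun i => ?_, funext fun a => hj.extend_apply _ _ a⟩
  by_cases hi : ∃ a, f (j a) = i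
  · obtain ⟨a, rfl⟩ := hi
    rw [Function.comp_apply, ← Function.comp_apply (f := f) (g := j), hj.extend_apply j g a]
    rfl
  · rw [Function.comp_apply, Function.extend_apply' j g i (by simpa using hi)]
    exact congrFun hg i

end Young

section YoungSum

variable {n m : ℕ} {f : Fin n → Fin m}

open scoped Classical

variable (f) in
def youngSum : EA n →ₗ[ℂ] EA n :=
  ∑ σ : youngSubgroup n m f, permMap n σ

lemma permMap_permMap (σ τ : Equiv.Perm (Fin n)) (x : EA n) :
    permMap n σ (permMap n τ x) = permMap n (σ * τ) x := by
  rw [permMap_eq_fstar, permMap_eq_fstar, permMap_eq_fstar, fstar_fstar, Equiv.Perm.coe_mul]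

lemma youngSum_permMap {τ : Equiv.Perm (Fin n)} (hτ : τ ∈ youngSubgroup n m f) (x : EA n) :
    youngSum f (permMap n τ x) = youngSum f x := by
  simp only [youngSum, LinearMap.sum_apply, permMap_permMap]
  exact Fintype.sum_equiv (Equiv.mulRight ⟨τ, hτ⟩) _ _ fun σ => by
    rw [Equiv.coe_mulRight, Subgroup.coe_mul]

lemma permMap_youngSum {τ : Equiv.Perm (Fin n)} (hτ : τ ∈ youngSubgroup n m f) (x : EA n) :
    permMap n τ (youngSum f x) = youngSum f x := by
  simp only [youngSum, LinearMap.sum_apply, map_sum, permMap_permMap]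
  exact Fintype.sum_equiv (Equiv.mulLeft ⟨τ, hτ⟩) _ _ fun σ => by
    rw [Equiv.coe_mulLeft, Subgroup.coe_mul]

lemma youngSum_apply_of_forall_permMap_eq {v : EA n}
    (hv : ∀ σ ∈ youngSubgroup n m f, permMap n σ v = v) :
    youngSum f v = Nat.card (youngSubgroup n m f) • v := by
  simp [youngSum, hv, Nat.card_eq_fintype_card]

lemma fstar_youngSum (x : EA n) :
    fstar n m f (youngSum f x) = Nat.card (youngSubgroup n m f) • fstar n m f x := by
  have hσ : ∀ σ ∈ youngSubgroup n m f, fstar n m f (permMap n σ x) = fstar n m f x := by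
    intro σ hσ
    rw [permMap_eq_fstar, fstar_fstar]
    exact congrArg (fstar n m · x) (funext hσ)
  simp [youngSum, hσ, Nat.card_eq_fintype_card]

end YoungSum

section FixedSubspace

variable {n m : ℕ} {f : Fin n → Fin m}

lemma mem_fixedW_iff {l : ℕ} {v : EA n} :
    v ∈ fixedW n m l f ↔ v ∈ Wsub n l ∧ ∀ σ ∈ youngSubgroup n m f, permMap n σ v = v := by
  simp [fixedW, Submodule.mem_iInf, sub_eq_zero]

lemma youngSum_mem_Wsub {l : ℕ} {x : EA n} (hx : x ∈ Wsub n l) : youngSum f x ∈ Wsub n l := by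
  rw [youngSum, LinearMap.sum_apply]
  exact Submodule.sum_mem _ fun σ _ => permMap_eq_fstar (σ : Equiv.Perm (Fin n)) ▸
    fstar_mem_Wsub l _ hx

lemma youngSum_ιMulti_single_eq_zero {l : ℕ} {j : Fin l → Fin n} (hj : Function.Injective j)
    (hfj : ¬ Function.Injective (f ∘ j)) :
    youngSum f (ιMulti ℂ l fun a => Pi.single (j a) (1 : ℂ)) = 0 := by
  obtain ⟨a, b, hab, hne⟩ := Function.not_injective_iff.1 hfj
  replace hab : f (j a) = f (j b) := hab
  set w : EA n := ιMulti ℂ l fun c => Pi.single (j c) (1 : ℂ)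
  have hswap : permMap n (Equiv.swap (j a) (j b)) w = -w := by
    rw [permMap_eq_fstar, fstar_ιMulti_single]
    simp_rw [← hj.map_swap]
    exact (ιMulti ℂ l).map_swap (fun c => (Pi.single (j c) (1 : ℂ) : Fin n → ℂ)) hne
  have h := youngSum_permMap (swap_mem_youngSubgroup hab) w
  rw [hswap, map_neg, neg_eq_iff_add_eq_zero, ← two_smul ℂ] at h
  exact (smul_eq_zero.1 h).resolve_left two_ne_zero

lemma youngSum_fstar_comp_section {g : Fin m → Fin n} (hg : f ∘ g = id) (x : EA n) :
    youngSum f (fstar n n (g ∘ f) x) = youngSum f x := by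
  suffices h : youngSum f ∘ₗ fstar n n (g ∘ f) = youngSum f from LinearMap.congr_fun h x
  refine LinearMap.ext_on_range (ιMulti_span ℂ (Fin n → ℂ)) fun ⟨l, v⟩ => ?_
  suffices h : (youngSum f ∘ₗ fstar n n (g ∘ f)).compAlternatingMap (ιMulti ℂ l) =
      (youngSum f).compAlternatingMap (ιMulti ℂ l) from DFunLike.congr_fun h v
  refine (Pi.basisFun ℂ (Fin n)).ext_alternating fun j hj => ?_
  simp only [LinearMap.compAlternatingMap_apply, LinearMap.comp_apply, Pi.basisFun_apply,
    fstar_ιMulti_single, Function.comp_apply]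
  by_cases hfj : Function.Injective (f ∘ j)
  · obtain ⟨u, hu, huj⟩ := exists_section_extend hg hfj
    obtain ⟨σ, hσ, hσu⟩ := exists_mem_youngSubgroup_comp_eq hu hg
    have hgf : ∀ a, g (f (j a)) = σ (j a) := fun a => by
      rw [← hσu]
      exact congrArg σ (congrFun huj a)
    simp_rw [hgf]
    rw [← fstar_ιMulti_single, ← permMap_eq_fstar, youngSum_permMap hσ]
  · obtain ⟨a, b, hab, hne⟩ := Function.not_injective_iff.1 hfj
    replace hab : f (j a) = f (j b) := hab
    rw [AlternatingMap.map_eq_zero_of_eq _ _ (by rw [hab]) hne, map_zero,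
      youngSum_ιMulti_single_eq_zero hj hfj]

variable (l : ℕ)

lemma disjoint_fixedW_ker_fstar (hf : Function.Surjective f) :
    Disjoint (fixedW n m l f) (LinearMap.ker (fstar n m f)) := by
  refine Submodule.disjoint_def.2 fun v hv hker => ?_
  obtain ⟨g, hg⟩ := hf.hasRightInverse
  have h := youngSum_apply_of_forall_permMap_eq (mem_fixedW_iff.1 hv).2
  rw [← youngSum_fstar_comp_section hg.comp_eq_id, ← fstar_fstar, LinearMap.mem_ker.1 hker,
    map_zero, map_zero, ← Nat.cast_smul_eq_nsmul ℂ, eq_comm, smul_eq_zero] at h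
  exact h.resolve_left (Nat.cast_ne_zero.2 Nat.card_pos.ne')

lemma map_fstar_fixedW (hf : Function.Surjective f) :
    Submodule.map (fstar n m f) (fixedW n m l f) = Wsub m l := by
  refine le_antisymm (Submodule.map_le_iff_le_comap.2 fun x hx =>
    fstar_mem_Wsub l f (mem_fixedW_iff.1 hx).1) fun w hw => ?_
  obtain ⟨g, hg⟩ := hf.hasRightInverse
  have hcard : (Nat.card (youngSubgroup n m f) : ℂ) ≠ 0 := Nat.cast_ne_zero.2 Nat.card_pos.ne'
  refine ⟨(Nat.card (youngSubgroup n m f) : ℂ)⁻¹ • youngSum f (fstar m n g w),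
    mem_fixedW_iff.2 ⟨Submodule.smul_mem _ _ (youngSum_mem_Wsub (fstar_mem_Wsub l _ hw)),
      fun σ hσ => by rw [map_smul, permMap_youngSum hσ]⟩, ?_⟩
  rw [map_smul, fstar_youngSum, fstar_fstar, hg.comp_eq_id, fstar_id, LinearMap.id_apply,
    ← Nat.cast_smul_eq_nsmul ℂ, inv_smul_smul₀ hcard]

end FixedSubspace

theorem statement_11_general (n m l : ℕ) (f : Fin n → Fin m) (hf : Function.Surjective f) :
    Submodule.map (fstar n m f) (fixedW n m l f) = Wsub m l ∧
    Set.InjOn (fstar n m f) (fixedW n m l f : Set (EA n)) ∧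
    Module.finrank ℂ ↥(fixedW n m l f) = Nat.choose (m - 1) l ∧
    (m = l + 1 → Module.finrank ℂ ↥(fixedW n m l f) = 1) := by
  have hmap := map_fstar_fixedW l hf
  have hinj : Set.InjOn (fstar n m f) (fixedW n m l f) :=
    LinearMap.injOn_of_disjoint_ker le_rfl (disjoint_fixedW_ker_fstar l hf)
  have hrank : Module.finrank ℂ (fixedW n m l f) = (m - 1).choose l := by
    rw [← finrank_Wsub, ← hmap, ← LinearMap.range_domRestrict]
    exact (LinearMap.finrank_range_of_inj (Set.injOn_iff_injective.1 hinj)).symm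
  exact ⟨hmap, hinj, hrank, fun hml => by rw [hrank, hml, Nat.add_sub_cancel, Nat.choose_self]⟩

/-- For a surjection `f : {1,…,n} → {1,…,m}` with `l+1 ≤ m ≤ n`, the restriction of `f_*`
to `W_{n,l}^{𝔖_f}` is a linear isomorphism onto `W_{m,l}`; in particular
`dim W_{n,l}^{𝔖_f} = C(m−1, l)`, which is `1` when `m = l+1`. -/
theorem statement_11 (n m l : ℕ) (hn : 1 ≤ n) (hl1 : 1 ≤ l) (hl2 : l ≤ n - 1)
    (hm : l + 1 ≤ m) (hmn : m ≤ n) (f : Fin n → Fin m) (hf : Function.Surjective f) :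
    Submodule.map (fstar n m f) (fixedW n m l f) = Wsub m l ∧
    Set.InjOn (fstar n m f) (fixedW n m l f : Set (EA n)) ∧
    Module.finrank ℂ ↥(fixedW n m l f) = Nat.choose (m - 1) l ∧
    (m = l + 1 → Module.finrank ℂ ↥(fixedW n m l f) = 1) :=
  statement_11_general n m l f hf
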